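/- arXiv:1306.4934 — 2 statements merged into one kernel-verified Lean document; each statement's English description precedes it below -/
import Mathlib

section
/- Let δ(α) be as in the closed form: δ(α) = |1/2 - α| for 0 ≤ α < 2/3, δ(α) = (1-α)/2 for 2/3 ≤ α < 1, δ(α) = 0 for α ≥ 1; and let d(α) be the GDOF piecewise function. Then the ratio δ(α)/d(α) equals (1-2α)/(2(1-α)) for 0 ≤ α < 1/2, equals 1 - 1/(2α) for 1/2 ≤ α < 2/3, equals (1-α)/(2-α) for 2/3 ≤ α < 1, and equals 0 for α ≥ 1. Moreover, 0 ≤ δ(α)/d(α) ≤ 1/2 for all α ≥ 0. -/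
/-! On each of the intervals `[0, 1/2)`, `[1/2, 2/3)`, `[2/3, 1)`, `[1, ∞)` both `deltaFn` and `gdof`
are affine, so the ratio is read off from their closed forms. The uniform bound needs no case
split on the ratio: `gdof ≥ 1/2` everywhere (each `max` is taken over two numbers summing to `1`), and `2 δ ≤ d` is an
affine inequality on each interval. -/

noncomputable def deltaFn (α : ℝ) : ℝ :=
  if α < 2/3 then |1/2 - α| else if α < 1 then (1 - α)/2 else 0

noncomputable def gdof (α : ℝ) : ℝ := min 1 (min (max (α/2) (1 - α/2)) (max α (1-α)))

section ClosedForms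

variable {α : ℝ}

theorem deltaFn_of_lt_half (h : α < 1/2) : deltaFn α = 1/2 - α := by
  rw [deltaFn, if_pos (by linarith), abs_of_nonneg (by linarith)]

theorem deltaFn_of_half_le_of_lt (h₁ : 1/2 ≤ α) (h₂ : α < 2/3) : deltaFn α = α - 1/2 := by
  rw [deltaFn, if_pos h₂, abs_of_nonpos (by linarith), neg_sub]

theorem deltaFn_of_le_of_lt_one (h₁ : 2/3 ≤ α) (h₂ : α < 1) : deltaFn α = (1 - α)/2 := by
  rw [deltaFn, if_neg (not_lt.mpr h₁), if_pos h₂]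

theorem deltaFn_of_one_le (h : 1 ≤ α) : deltaFn α = 0 := by
  rw [deltaFn, if_neg (by linarith), if_neg (not_lt.mpr h)]

theorem deltaFn_nonneg : 0 ≤ deltaFn α := by
  unfold deltaFn
  split_ifs <;> linarith [abs_nonneg (1/2 - α)]

theorem gdof_of_nonneg_of_le_half (h₀ : 0 ≤ α) (h : α ≤ 1/2) : gdof α = 1 - α := by
  rw [gdof, max_eq_right (by linarith), max_eq_right (by linarith),
    min_eq_right (by linarith : 1 - α ≤ 1 - α/2), min_eq_right (by linarith)]

theorem gdof_of_half_le_of_le (h₁ : 1/2 ≤ α) (h₂ : α ≤ 2/3) : gdof α = α := by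
  rw [gdof, max_eq_right (by linarith), max_eq_left (by linarith),
    min_eq_right (by linarith : α ≤ 1 - α/2), min_eq_right (by linarith)]

theorem gdof_of_le_of_le_one (h₁ : 2/3 ≤ α) (h₂ : α ≤ 1) : gdof α = 1 - α/2 := by
  rw [gdof, max_eq_right (by linarith), max_eq_left (by linarith),
    min_eq_left (by linarith : 1 - α/2 ≤ α), min_eq_right (by linarith)]

theorem half_le_gdof : 1/2 ≤ gdof α := by
  have half_sum_le_max (a b : ℝ) : (a + b)/2 ≤ max a b := by
    linarith [le_max_left a b, le_max_right a b]
  exact le_min (by norm_num) (le_min (by linarith [half_sum_le_max (α/2) (1 - α/2)])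
    (by linarith [half_sum_le_max α (1 - α)]))

theorem gdof_pos : 0 < gdof α :=
  lt_of_lt_of_le (by norm_num) half_le_gdof

theorem two_mul_deltaFn_le_gdof (hα : 0 ≤ α) : 2 * deltaFn α ≤ gdof α := by
  rcases lt_or_ge α (1/2) with h₁ | h₁
  · rw [deltaFn_of_lt_half h₁, gdof_of_nonneg_of_le_half hα h₁.le]; linarith
  rcases lt_or_ge α (2/3) with h₂ | h₂
  · rw [deltaFn_of_half_le_of_lt h₁ h₂, gdof_of_half_le_of_le h₁ h₂.le]; linarith
  rcases lt_or_ge α 1 with h₃ | h₃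
  · rw [deltaFn_of_le_of_lt_one h₂ h₃, gdof_of_le_of_le_one h₂ h₃.le]; linarith
  · rw [deltaFn_of_one_le h₃, mul_zero]; exact gdof_pos.le

end ClosedForms

section Ratio

variable {α : ℝ}

theorem deltaFn_div_gdof_of_nonneg_of_lt_half (h₀ : 0 ≤ α) (h : α < 1/2) :
    deltaFn α / gdof α = (1 - 2*α)/(2*(1 - α)) := by
  rw [deltaFn_of_lt_half h, gdof_of_nonneg_of_le_half h₀ h.le,
    div_eq_div_iff (by linarith) (by linarith)]
  ring

theorem deltaFn_div_gdof_of_half_le_of_lt (h₁ : 1/2 ≤ α) (h₂ : α < 2/3) :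
    deltaFn α / gdof α = 1 - 1/(2*α) := by
  have hα : α ≠ 0 := by positivity
  rw [deltaFn_of_half_le_of_lt h₁ h₂, gdof_of_half_le_of_le h₁ h₂.le]
  field_simp

theorem deltaFn_div_gdof_of_le_of_lt_one (h₁ : 2/3 ≤ α) (h₂ : α < 1) :
    deltaFn α / gdof α = (1 - α)/(2 - α) := by
  rw [deltaFn_of_le_of_lt_one h₁ h₂, gdof_of_le_of_le_one h₁ h₂.le,
    div_eq_div_iff (by linarith) (by linarith)]
  ring

theorem deltaFn_div_gdof_of_one_le (h : 1 ≤ α) : deltaFn α / gdof α = 0 := by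
  rw [deltaFn_of_one_le h, zero_div]

theorem deltaFn_div_gdof_le_half (hα : 0 ≤ α) : deltaFn α / gdof α ≤ 1/2 := by
  rw [div_le_iff₀ gdof_pos]
  linarith [two_mul_deltaFn_le_gdof hα]

end Ratio

theorem stmt13 (α : ℝ) (hα : 0 ≤ α) :
    (α < 1/2 → deltaFn α / gdof α = (1 - 2*α)/(2*(1-α))) ∧
    (1/2 ≤ α → α < 2/3 → deltaFn α / gdof α = 1 - 1/(2*α)) ∧
    (2/3 ≤ α → α < 1 → deltaFn α / gdof α = (1-α)/(2-α)) ∧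
    (1 ≤ α → deltaFn α / gdof α = 0) ∧
    (0 ≤ deltaFn α / gdof α ∧ deltaFn α / gdof α ≤ 1/2) :=
  ⟨deltaFn_div_gdof_of_nonneg_of_lt_half hα, deltaFn_div_gdof_of_half_le_of_lt,
    deltaFn_div_gdof_of_le_of_lt_one, deltaFn_div_gdof_of_one_le,
    div_nonneg deltaFn_nonneg gdof_pos.le, deltaFn_div_gdof_le_half hα⟩
end

section
/- For fixed α ∈ [0,1), the limit as P → ∞ of [(1/2)·(min{log₂(1+P) + log₂(1 + P/(1+P^α)), 2·log₂(1 + P^α + P/(1+P^α))} - log₂(1+P+P^α))] / log₂(P) equals min{(1-α)/2, |1/2 - α|}. -/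
open Real Filter Topology

/-!
Each of the four logarithms is the logarithm of a quantity squeezed between constant multiples of
a power of `P`: `1 + P` and `1 + P + P ^ α` are of order `P`, `1 + P / (1 + P ^ α)` of order
`P ^ (1 - α)`, and `1 + P ^ α + P / (1 + P ^ α)` of order `P ^ max α (1 - α)`. Divided by `log P`,
each therefore tends to its exponent, and the limit is `(min (2 - α) (2 max α (1 - α)) - 1) / 2`,
which is a case analysis away from `min ((1 - α) / 2) |1 / 2 - α|`.
-/

lemma abs_logb_sub_logb_le_logb {b k x y : ℝ} (hb : 1 < b) (hy : 0 < y) (hk : 0 < k)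
    (hlo : y / k ≤ x) (hhi : x ≤ k * y) : |logb b x - logb b y| ≤ logb b k := by
  have hx : 0 < x := (div_pos hy hk).trans_le hlo
  have hlo' := (logb_le_logb hb (div_pos hy hk) hx).2 hlo
  have hhi' := (logb_le_logb hb hx (mul_pos hk hy)).2 hhi
  rw [logb_div hy.ne' hk.ne'] at hlo'
  rw [logb_mul hk.ne' hy.ne'] at hhi'
  exact abs_sub_le_iff.2 ⟨by linarith, by linarith⟩

theorem tendsto_logb_div_logb_of_rpow_bounds {b c k : ℝ} {f : ℝ → ℝ} (hb : 1 < b) (hk : 0 < k)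
    (h : ∀ᶠ P in atTop, P ^ c / k ≤ f P ∧ f P ≤ k * P ^ c) :
    Tendsto (fun P => logb b (f P) / logb b P) atTop (𝓝 c) := by
  rw [tendsto_iff_norm_sub_tendsto_zero]
  have hbound : Tendsto (fun P => logb b k / logb b P) atTop (𝓝 0) :=
    tendsto_const_nhds.div_atTop (tendsto_logb_atTop hb)
  refine squeeze_zero' (.of_forall fun _ => norm_nonneg _) ?_ hbound
  filter_upwards [h, eventually_gt_atTop 1] with P ⟨hlo, hhi⟩ hP
  have hP₀ : 0 < P := one_pos.trans hP
  have hL : 0 < logb b P := logb_pos hb hP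
  have hratio : logb b (f P) / logb b P - c = (logb b (f P) - logb b (P ^ c)) / logb b P := by
    rw [logb_rpow_eq_mul_logb_of_pos hP₀]
    field_simp
  rw [Real.norm_eq_abs, hratio, abs_div, abs_of_pos hL]
  exact div_le_div_of_nonneg_right
    (abs_logb_sub_logb_le_logb hb (rpow_pos_of_pos hP₀ c) hk hlo hhi) hL.le

section GrowthBounds

variable {P α : ℝ}

lemma div_one_add_rpow_le (hP : 0 < P) : P / (1 + P ^ α) ≤ P ^ (1 - α) := by
  have hsplit : P ^ (1 - α) * P ^ α = P := by rw [← rpow_add hP]; simp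
  have hα : 0 < P ^ α := rpow_pos_of_pos hP α
  rw [div_le_iff₀ (by positivity)]
  nlinarith [rpow_pos_of_pos hP (1 - α)]

lemma rpow_div_two_le_div_one_add_rpow (hP : 1 ≤ P) (hα : 0 ≤ α) :
    P ^ (1 - α) / 2 ≤ P / (1 + P ^ α) := by
  have hsplit : P ^ (1 - α) * P ^ α = P := by rw [← rpow_add (by linarith)]; simp
  have hα : 1 ≤ P ^ α := one_le_rpow hP hα
  rw [div_le_div_iff₀ two_pos (by positivity)]
  nlinarith [rpow_pos_of_pos (by linarith : 0 < P) (1 - α)]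

lemma one_add_div_one_add_rpow_bounds (hP : 1 ≤ P) (hα : α ∈ Set.Icc (0 : ℝ) 1) :
    P ^ (1 - α) / 2 ≤ 1 + P / (1 + P ^ α) ∧ 1 + P / (1 + P ^ α) ≤ 2 * P ^ (1 - α) := by
  have hlo := rpow_div_two_le_div_one_add_rpow hP hα.1
  have hhi := div_one_add_rpow_le (α := α) (by linarith : 0 < P)
  have hone : 1 ≤ P ^ (1 - α) := one_le_rpow hP (by linarith [hα.2])
  constructor <;> linarith

lemma one_add_rpow_add_div_one_add_rpow_bounds (hP : 1 ≤ P) (hα : α ∈ Set.Icc (0 : ℝ) 1) :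
    P ^ max α (1 - α) / 3 ≤ 1 + P ^ α + P / (1 + P ^ α) ∧
      1 + P ^ α + P / (1 + P ^ α) ≤ 3 * P ^ max α (1 - α) := by
  have hlo := rpow_div_two_le_div_one_add_rpow hP hα.1
  have hhi := div_one_add_rpow_le (α := α) (by linarith : 0 < P)
  have hone : 1 ≤ P ^ max α (1 - α) := one_le_rpow hP (le_max_of_le_left hα.1)
  have hα_le : P ^ α ≤ P ^ max α (1 - α) := rpow_le_rpow_of_exponent_le hP (le_max_left _ _)
  have hβ_le : P ^ (1 - α) ≤ P ^ max α (1 - α) :=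
    rpow_le_rpow_of_exponent_le hP (le_max_right _ _)
  have hpos : 0 < P ^ α := rpow_pos_of_pos (by linarith) α
  refine ⟨?_, by linarith⟩
  rcases max_choice α (1 - α) with hm | hm <;> rw [hm] <;> linarith

lemma one_add_add_rpow_bounds (hP : 1 ≤ P) (hα : α ∈ Set.Icc (0 : ℝ) 1) :
    P ^ (1 : ℝ) / 3 ≤ 1 + P + P ^ α ∧ 1 + P + P ^ α ≤ 3 * P ^ (1 : ℝ) := by
  have hα_le : P ^ α ≤ P := by simpa using rpow_le_rpow_of_exponent_le hP hα.2
  have hpos : 0 < P ^ α := rpow_pos_of_pos (by linarith) α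
  rw [rpow_one]
  constructor <;> linarith

lemma one_add_bounds (hP : 1 ≤ P) : P ^ (1 : ℝ) / 2 ≤ 1 + P ∧ 1 + P ≤ 2 * P ^ (1 : ℝ) := by
  rw [rpow_one]
  constructor <;> linarith

end GrowthBounds

lemma half_min_sub_one_eq {α : ℝ} (hα : 0 ≤ α) :
    1 / 2 * (min (1 + (1 - α)) (2 * max α (1 - α)) - 1) = min ((1 - α) / 2) |1 / 2 - α| := by
  rcases le_total α (1 / 2) with h | h
  · rw [max_eq_right (by linarith), abs_of_nonneg (by linarith), min_eq_right (by linarith),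
      min_eq_right (by linarith)]
    ring
  · rw [max_eq_left (by linarith), abs_of_nonpos (by linarith)]
    rcases le_total α (2 / 3) with h' | h'
    · rw [min_eq_right (by linarith), min_eq_right (by linarith)]
      ring
    · rw [min_eq_left (by linarith), min_eq_left (by linarith)]
      ring

theorem stmt15 (α : ℝ) (hα : α ∈ Set.Ico (0:ℝ) 1) :
    Tendsto (fun P : ℝ =>
        ((1/2) * (min (logb 2 (1+P) + logb 2 (1 + P/(1 + P ^ α)))
            (2 * logb 2 (1 + P ^ α + P/(1 + P ^ α)))
          - logb 2 (1 + P + P ^ α))) / logb 2 P)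
      atTop (nhds (min ((1-α)/2) |1/2 - α|)) := by
  have hα' : α ∈ Set.Icc (0 : ℝ) 1 := Set.Ico_subset_Icc_self hα
  have hP := eventually_ge_atTop (1 : ℝ)
  have ratio {c k : ℝ} {f : ℝ → ℝ} (hk : 0 < k)
      (h : ∀ P, 1 ≤ P → P ^ c / k ≤ f P ∧ f P ≤ k * P ^ c) :=
    tendsto_logb_div_logb_of_rpow_bounds one_lt_two hk (hP.mono h)
  have hA := ratio two_pos fun _ => one_add_bounds
  have hB := ratio two_pos fun _ h => one_add_div_one_add_rpow_bounds h hα'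
  have hC := ratio three_pos fun _ h => one_add_rpow_add_div_one_add_rpow_bounds h hα'
  have hD := ratio three_pos fun _ h => one_add_add_rpow_bounds h hα'
  rw [← half_min_sub_one_eq hα.1]
  refine ((((hA.add hB).min (hC.const_mul 2)).sub hD).const_mul (1 / 2)).congr' ?_
  filter_upwards [eventually_gt_atTop (1 : ℝ)] with P hP₁
  have hL : 0 < logb 2 P := logb_pos one_lt_two hP₁
  rw [← add_div, mul_div_assoc' 2, min_div_div_right hL.le, ← sub_div, ← mul_div_assoc]
end
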